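/- arXiv:2404.04681 — 3 statements merged into one kernel-verified Lean document; each statement's English description precedes it below -/
import Mathlib

section
/- The distortion-rate-perception function D(R,P) = min { Σ_{i,j} w_{ij} p_i d_{ij} : w row-stochastic, r_j = Σ_i w_{ij} p_i, I(w) ≤ R, d(p,r) ≤ P } is non-increasing in R and non-increasing in P, and is jointly convex in (R,P) whenever the perception measure d(p,·) is convex in its second argument. -/
private lemma logscale {c a b : ℝ} (hc : 0 ≤ c) (ha : 0 ≤ a) (hb0 : b = 0 → a = 0) :
    (c*a) * (Real.log (c*a) - Real.log (c*b)) = c * (a * (Real.log a - Real.log b)) := by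
  rcases eq_or_lt_of_le hc with h|hc
  · simp [← h]
  rcases eq_or_lt_of_le ha with h|ha
  · simp [← h]
  rcases eq_or_ne b 0 with h|h
  · exact absurd (hb0 h) (ne_of_gt ha)
  · rw [Real.log_mul (ne_of_gt hc) (ne_of_gt ha), Real.log_mul (ne_of_gt hc) h]
    ring

private lemma logsum {a₁ a₂ b₁ b₂ : ℝ} (ha₁ : 0 ≤ a₁) (ha₂ : 0 ≤ a₂)
    (hb₁ : 0 ≤ b₁) (hb₂ : 0 ≤ b₂) (h₁ : b₁ = 0 → a₁ = 0) (h₂ : b₂ = 0 → a₂ = 0) :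
    (a₁+a₂) * (Real.log (a₁+a₂) - Real.log (b₁+b₂)) ≤
      a₁*(Real.log a₁ - Real.log b₁) + a₂*(Real.log a₂ - Real.log b₂) := by
  rcases eq_or_lt_of_le ha₁ with h|ha₁'
  · rcases eq_or_lt_of_le ha₂ with h2|ha₂'
    · simp [← h, ← h2]
    · have hb₂' : 0 < b₂ := lt_of_le_of_ne hb₂ (fun he => absurd (h₂ he.symm) (ne_of_gt ha₂'))
      have hlog : Real.log b₂ ≤ Real.log (b₁+b₂) := Real.log_le_log hb₂' (by linarith)
      simp only [← h, zero_add, zero_mul]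
      nlinarith
  rcases eq_or_lt_of_le ha₂ with h2|ha₂'
  · have hb₁' : 0 < b₁ := lt_of_le_of_ne hb₁ (fun he => absurd (h₁ he.symm) (ne_of_gt ha₁'))
    have hlog : Real.log b₁ ≤ Real.log (b₁+b₂) := Real.log_le_log hb₁' (by linarith)
    simp only [← h2, add_zero, zero_mul]
    nlinarith
  have hb₁' : 0 < b₁ := lt_of_le_of_ne hb₁ (fun he => absurd (h₁ he.symm) (ne_of_gt ha₁'))
  have hb₂' : 0 < b₂ := lt_of_le_of_ne hb₂ (fun he => absurd (h₂ he.symm) (ne_of_gt ha₂'))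
  have ht : 0 < b₁ + b₂ := by linarith
  have hs : 0 < a₁ + a₂ := by linarith
  have key : ∀ a b : ℝ, 0 < a → 0 < b →
      a * (Real.log (a₁+a₂) - Real.log (b₁+b₂)) ≤
        a * (Real.log a - Real.log b) + (a₁+a₂)*b/(b₁+b₂) - a := by
    intro a b ha hb
    have hl := Real.log_le_sub_one_of_pos (show 0 < (a₁+a₂)*b/((b₁+b₂)*a) by positivity)
    rw [Real.log_div (by positivity) (by positivity),
        Real.log_mul hs.ne' hb.ne', Real.log_mul ht.ne' ha.ne'] at hl
    have h3 := mul_le_mul_of_nonneg_left hl ha.le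
    have heq : a * ((a₁+a₂)*b/((b₁+b₂)*a) - 1) = (a₁+a₂)*b/(b₁+b₂) - a := by
      field_simp
    nlinarith
  have k1 := key a₁ b₁ ha₁' hb₁'
  have k2 := key a₂ b₂ ha₂' hb₂'
  have hsum : (a₁+a₂)*b₁/(b₁+b₂) + (a₁+a₂)*b₂/(b₁+b₂) = a₁+a₂ := by
    field_simp
  nlinarith

private lemma fconv {a b a' b' l : ℝ} (ha : 0 ≤ a) (hb : 0 ≤ b) (ha' : 0 ≤ a') (hb' : 0 ≤ b')
    (hab : b = 0 → a = 0) (hab' : b' = 0 → a' = 0) (hl : 0 ≤ l) (hl1 : l ≤ 1) :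
    (l*a + (1-l)*a') * (Real.log (l*a+(1-l)*a') - Real.log (l*b+(1-l)*b')) ≤
      l * (a*(Real.log a - Real.log b)) + (1-l) * (a'*(Real.log a' - Real.log b')) := by
  have h1 : (0:ℝ) ≤ 1 - l := by linarith
  have key := logsum (a₁ := l*a) (a₂ := (1-l)*a') (b₁ := l*b) (b₂ := (1-l)*b')
    (by positivity) (by positivity) (by positivity) (by positivity)
    (fun h => by rcases mul_eq_zero.1 h with h|h
                 · rw [h, zero_mul]
                 · rw [hab h, mul_zero])
    (fun h => by rcases mul_eq_zero.1 h with h|h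
                 · rw [h, zero_mul]
                 · rw [hab' h, mul_zero])
  rwa [logscale hl ha hab, logscale h1 ha' hab'] at key

/-- the distortion-rate-perception function `D(R,P)` is non-increasing in
each argument and jointly convex in `(R,P)` when the perception measure is convex in
its second argument. -/
theorem stmt6 {M : ℕ} [NeZero M] (p : Fin M → ℝ) (dmat : Fin M → Fin M → ℝ)
    (hp : ∀ i, 0 < p i) (hp1 : ∑ i, p i = 1) (hd0 : ∀ i j, 0 ≤ dmat i j)
    (dP : (Fin M → ℝ) → (Fin M → ℝ) → ℝ)
    (hdP0 : ∀ q r, 0 ≤ dP q r) (hdPeq : ∀ q r, dP q r = 0 ↔ q = r)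
    (hdPconv : ∀ (q r₁ r₂ : Fin M → ℝ) (l : ℝ), 0 ≤ l → l ≤ 1 →
      dP q (fun j => l * r₁ j + (1 - l) * r₂ j) ≤ l * dP q r₁ + (1 - l) * dP q r₂)
    (DF : ℝ → ℝ → ℝ)
    (hDF : ∀ R P, DF R P = sInf { t : ℝ | ∃ (w : Fin M → Fin M → ℝ) (r : Fin M → ℝ),
        (∀ i j, 0 ≤ w i j) ∧ (∀ i, ∑ j, w i j = 1) ∧
        (∀ j, ∑ i, w i j * p i = r j) ∧
        (∑ i, ∑ j, w i j * p i * (Real.log (w i j) - Real.log (r j)) ≤ R) ∧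
        dP p r ≤ P ∧
        t = ∑ i, ∑ j, w i j * p i * dmat i j }) :
    (∀ R₁ R₂ P : ℝ, 0 ≤ R₁ → R₁ ≤ R₂ → 0 ≤ P → DF R₂ P ≤ DF R₁ P) ∧
    (∀ R P₁ P₂ : ℝ, 0 ≤ R → 0 ≤ P₁ → P₁ ≤ P₂ → DF R P₂ ≤ DF R P₁) ∧
    (∀ R₁ P₁ R₂ P₂ l : ℝ, 0 ≤ R₁ → 0 ≤ P₁ → 0 ≤ R₂ → 0 ≤ P₂ → 0 ≤ l → l ≤ 1 →
      DF (l * R₁ + (1 - l) * R₂) (l * P₁ + (1 - l) * P₂) ≤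
        l * DF R₁ P₁ + (1 - l) * DF R₂ P₂) := by
  set S : ℝ → ℝ → Set ℝ := fun R P =>
    { t : ℝ | ∃ (w : Fin M → Fin M → ℝ) (r : Fin M → ℝ),
        (∀ i j, 0 ≤ w i j) ∧ (∀ i, ∑ j, w i j = 1) ∧
        (∀ j, ∑ i, w i j * p i = r j) ∧
        (∑ i, ∑ j, w i j * p i * (Real.log (w i j) - Real.log (r j)) ≤ R) ∧
        dP p r ≤ P ∧
        t = ∑ i, ∑ j, w i j * p i * dmat i j } with hS
  -- bounded below by 0
  have hbdd : ∀ R P, BddBelow (S R P) := by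
    intro R P
    refine ⟨0, fun t ht => ?_⟩
    obtain ⟨w, r, hw0, _, _, _, _, ht⟩ := ht
    rw [ht]
    apply Finset.sum_nonneg; intro i _
    apply Finset.sum_nonneg; intro j _
    exact mul_nonneg (mul_nonneg (hw0 i j) (hp i).le) (hd0 i j)
  -- nonempty for R, P ≥ 0
  have hne : ∀ R P : ℝ, 0 ≤ R → 0 ≤ P → (S R P).Nonempty := by
    intro R P hR hP
    refine ⟨∑ i, ∑ j, p j * p i * dmat i j, fun i j => p j, p, fun i j => (hp j).le,
      fun i => hp1, ?_, ?_, ?_, rfl⟩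
    · intro j
      rw [← Finset.mul_sum, hp1, mul_one]
    · have : ∀ i ∈ Finset.univ, ∑ j, p j * p i * (Real.log (p j) - Real.log (p j)) = 0 := by
        intro i _; simp
      rw [Finset.sum_congr rfl this]
      simpa using hR
    · rw [(hdPeq p p).2 rfl]; exact hP
  -- subset monotonicity in R and P
  have mono₁ : ∀ R₁ R₂ P : ℝ, R₁ ≤ R₂ → S R₁ P ⊆ S R₂ P := by
    intro R₁ R₂ P hR t ht
    obtain ⟨w, r, h1, h2, h3, h4, h5, h6⟩ := ht
    exact ⟨w, r, h1, h2, h3, le_trans h4 hR, h5, h6⟩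
  have mono₂ : ∀ R P₁ P₂ : ℝ, P₁ ≤ P₂ → S R P₁ ⊆ S R P₂ := by
    intro R P₁ P₂ hP t ht
    obtain ⟨w, r, h1, h2, h3, h4, h5, h6⟩ := ht
    exact ⟨w, r, h1, h2, h3, h4, le_trans h5 hP, h6⟩
  -- mixing lemma
  have hmix : ∀ R₁ P₁ R₂ P₂ l : ℝ, 0 ≤ l → l ≤ 1 →
      ∀ t₁ ∈ S R₁ P₁, ∀ t₂ ∈ S R₂ P₂,
        l * t₁ + (1 - l) * t₂ ∈ S (l * R₁ + (1 - l) * R₂) (l * P₁ + (1 - l) * P₂) := by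
    intro R₁ P₁ R₂ P₂ l hl hl1 t₁ ht₁ t₂ ht₂
    obtain ⟨w₁, r₁, hw₁0, hw₁row, hr₁, hI₁, hdp₁, hT₁⟩ := ht₁
    obtain ⟨w₂, r₂, hw₂0, hw₂row, hr₂, hI₂, hdp₂, hT₂⟩ := ht₂
    have h1l : (0:ℝ) ≤ 1 - l := by linarith
    have hr₁0 : ∀ j, 0 ≤ r₁ j := fun j => by
      rw [← hr₁ j]
      exact Finset.sum_nonneg fun i _ => mul_nonneg (hw₁0 i j) (hp i).le
    have hr₂0 : ∀ j, 0 ≤ r₂ j := fun j => by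
      rw [← hr₂ j]
      exact Finset.sum_nonneg fun i _ => mul_nonneg (hw₂0 i j) (hp i).le
    have hz₁ : ∀ i j, r₁ j = 0 → w₁ i j = 0 := by
      intro i j hj
      have := (Finset.sum_eq_zero_iff_of_nonneg
        (fun i _ => mul_nonneg (hw₁0 i j) (hp i).le)).1 ((hr₁ j).trans hj) i (Finset.mem_univ i)
      exact (mul_eq_zero.1 this).resolve_right (hp i).ne'
    have hz₂ : ∀ i j, r₂ j = 0 → w₂ i j = 0 := by
      intro i j hj
      have := (Finset.sum_eq_zero_iff_of_nonneg
        (fun i _ => mul_nonneg (hw₂0 i j) (hp i).le)).1 ((hr₂ j).trans hj) i (Finset.mem_univ i)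
      exact (mul_eq_zero.1 this).resolve_right (hp i).ne'
    refine ⟨fun i j => l * w₁ i j + (1 - l) * w₂ i j,
      fun j => l * r₁ j + (1 - l) * r₂ j, ?_, ?_, ?_, ?_, ?_, ?_⟩
    · intro i j
      exact add_nonneg (mul_nonneg hl (hw₁0 i j)) (mul_nonneg h1l (hw₂0 i j))
    · intro i
      rw [Finset.sum_add_distrib, ← Finset.mul_sum, ← Finset.mul_sum, hw₁row i, hw₂row i]
      ring
    · intro j
      have : ∀ i, (l * w₁ i j + (1 - l) * w₂ i j) * p i
          = l * (w₁ i j * p i) + (1 - l) * (w₂ i j * p i) := fun i => by ring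
      simp only [this]
      rw [Finset.sum_add_distrib, ← Finset.mul_sum, ← Finset.mul_sum, hr₁ j, hr₂ j]
    · -- mutual information convexity
      have hterm : ∀ i j,
          (l * w₁ i j + (1 - l) * w₂ i j) * p i *
            (Real.log (l * w₁ i j + (1 - l) * w₂ i j) -
              Real.log (l * r₁ j + (1 - l) * r₂ j)) ≤
          l * (w₁ i j * p i * (Real.log (w₁ i j) - Real.log (r₁ j))) +
          (1 - l) * (w₂ i j * p i * (Real.log (w₂ i j) - Real.log (r₂ j))) := by
        intro i j
        have key := fconv (a := w₁ i j) (b := r₁ j) (a' := w₂ i j) (b' := r₂ j) (l := l)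
          (hw₁0 i j) (hr₁0 j) (hw₂0 i j) (hr₂0 j) (hz₁ i j) (hz₂ i j) hl hl1
        have hmul := mul_le_mul_of_nonneg_left key (hp i).le
        calc (l * w₁ i j + (1 - l) * w₂ i j) * p i *
              (Real.log (l * w₁ i j + (1 - l) * w₂ i j) -
                Real.log (l * r₁ j + (1 - l) * r₂ j))
            = p i * ((l * w₁ i j + (1 - l) * w₂ i j) *
              (Real.log (l * w₁ i j + (1 - l) * w₂ i j) -
                Real.log (l * r₁ j + (1 - l) * r₂ j))) := by ring
          _ ≤ p i * (l * (w₁ i j * (Real.log (w₁ i j) - Real.log (r₁ j))) +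
              (1 - l) * (w₂ i j * (Real.log (w₂ i j) - Real.log (r₂ j)))) := hmul
          _ = l * (w₁ i j * p i * (Real.log (w₁ i j) - Real.log (r₁ j))) +
              (1 - l) * (w₂ i j * p i * (Real.log (w₂ i j) - Real.log (r₂ j))) := by ring
      calc ∑ i, ∑ j, (l * w₁ i j + (1 - l) * w₂ i j) * p i *
              (Real.log (l * w₁ i j + (1 - l) * w₂ i j) -
                Real.log (l * r₁ j + (1 - l) * r₂ j))
          ≤ ∑ i, ∑ j, (l * (w₁ i j * p i * (Real.log (w₁ i j) - Real.log (r₁ j))) +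
              (1 - l) * (w₂ i j * p i * (Real.log (w₂ i j) - Real.log (r₂ j)))) := by
            apply Finset.sum_le_sum; intro i _
            apply Finset.sum_le_sum; intro j _
            exact hterm i j
        _ = l * (∑ i, ∑ j, w₁ i j * p i * (Real.log (w₁ i j) - Real.log (r₁ j))) +
            (1 - l) * (∑ i, ∑ j, w₂ i j * p i * (Real.log (w₂ i j) - Real.log (r₂ j))) := by
            simp [Finset.sum_add_distrib, Finset.mul_sum]
        _ ≤ l * R₁ + (1 - l) * R₂ :=
            add_le_add (mul_le_mul_of_nonneg_left hI₁ hl)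
              (mul_le_mul_of_nonneg_left hI₂ h1l)
    · exact le_trans (hdPconv p r₁ r₂ l hl hl1)
        (add_le_add (mul_le_mul_of_nonneg_left hdp₁ hl)
          (mul_le_mul_of_nonneg_left hdp₂ h1l))
    · rw [hT₁, hT₂]
      have : ∀ i j, (l * w₁ i j + (1 - l) * w₂ i j) * p i * dmat i j
          = l * (w₁ i j * p i * dmat i j) + (1 - l) * (w₂ i j * p i * dmat i j) :=
        fun i j => by ring
      simp only [this]
      simp [Finset.sum_add_distrib, Finset.mul_sum]
  refine ⟨?_, ?_, ?_⟩
  · intro R₁ R₂ P hR₁ hR hP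
    rw [hDF, hDF]
    exact csInf_le_csInf (hbdd R₂ P) (hne R₁ P hR₁ hP) (mono₁ R₁ R₂ P hR)
  · intro R P₁ P₂ hR hP₁ hP
    rw [hDF, hDF]
    exact csInf_le_csInf (hbdd R P₂) (hne R P₁ hR hP₁) (mono₂ R P₁ P₂ hP)
  · intro R₁ P₁ R₂ P₂ l hR₁ hP₁ hR₂ hP₂ hl hl1
    have h1l : (0:ℝ) ≤ 1 - l := by linarith
    rw [hDF, hDF, hDF]
    apply le_of_forall_pos_le_add
    intro ε hε
    obtain ⟨t₁, ht₁, ht₁'⟩ := Real.lt_sInf_add_pos (hne R₁ P₁ hR₁ hP₁) hε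
    obtain ⟨t₂, ht₂, ht₂'⟩ := Real.lt_sInf_add_pos (hne R₂ P₂ hR₂ hP₂) hε
    calc sInf (S (l * R₁ + (1 - l) * R₂) (l * P₁ + (1 - l) * P₂))
        ≤ l * t₁ + (1 - l) * t₂ :=
          csInf_le (hbdd _ _) (hmix R₁ P₁ R₂ P₂ l hl hl1 t₁ ht₁ t₂ ht₂)
      _ ≤ l * (sInf (S R₁ P₁) + ε) + (1 - l) * (sInf (S R₂ P₂) + ε) :=
          add_le_add (mul_le_mul_of_nonneg_left ht₁'.le hl)
            (mul_le_mul_of_nonneg_left ht₂'.le h1l)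
      _ = l * sInf (S R₁ P₁) + (1 - l) * sInf (S R₂ P₂) + ε := by ring
end

section
/- The total variation distance tensorizes linearly in the sense used for the RDP reduction only up to inequality in general; however for the variant n-letter RDP function with non-identically-distributed reconstructions and a tensorizable perception measure d satisfying d(p^{⊗n}, Π_i q_i) = Σ_i d(p, q_i) and convexity in the second argument, one has R̃^{[n]}(D,P) = R(D, P/n): the n-letter optimum with average mutual information, average distortion, and product-measure perception constraints equals the single-letter RDP value at perception level P/n. -/
lemma aux1 (a c : ℝ) (ha : 0 ≤ a) (hc : 0 ≤ c) (h : c = 0 → a = 0) :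
    a - c ≤ a * (Real.log a - Real.log c) := by
  rcases eq_or_lt_of_le ha with h0 | h0
  · simp [← h0]; linarith
  · have hc0 : 0 < c := by
      rcases eq_or_lt_of_le hc with h1 | h1
      · exact absurd (h h1.symm) (by linarith)
      · exact h1
    have := Real.log_le_sub_one_of_pos (show 0 < c / a by positivity)
    rw [Real.log_div (by linarith) (by linarith)] at this
    have h3 : a * (Real.log c - Real.log a) ≤ a * (c / a - 1) :=
      mul_le_mul_of_nonneg_left this ha
    have h4 : a * (c / a - 1) = c - a := by field_simp
    nlinarith [h3, h4]

lemma log_mul_reform (x y q : ℝ) (hq : 0 < q) (hx : 0 ≤ x) (hxy : x = 0 ∨ 0 < y) :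
    x * q * (Real.log x - Real.log y) = (x * q) * (Real.log (x * q) - Real.log (y * q)) := by
  rcases hxy with h | h
  · simp [h]
  · rcases eq_or_lt_of_le hx with h0 | h0
    · simp [← h0]
    · rw [Real.log_mul (by linarith) (by linarith), Real.log_mul (by linarith) (by linarith)]
      ring

lemma kl_convex {n : ℕ} [NeZero n] (a b : Fin n → ℝ) (ha : ∀ t, 0 ≤ a t)
    (hb : ∀ t, 0 ≤ b t) (hab : ∀ t, b t = 0 → a t = 0) :
    ((1 / (n : ℝ)) * ∑ t, a t) *
        (Real.log ((1 / (n : ℝ)) * ∑ t, a t) - Real.log ((1 / (n : ℝ)) * ∑ t, b t)) ≤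
      (1 / (n : ℝ)) * ∑ t, a t * (Real.log (a t) - Real.log (b t)) := by
  have hn : (0 : ℝ) < n := by
    exact_mod_cast Nat.pos_of_ne_zero (NeZero.ne n)
  set A := ∑ t, a t with hA
  set B := ∑ t, b t with hB
  have hA0 : 0 ≤ A := Finset.sum_nonneg fun t _ => ha t
  have hB0 : 0 ≤ B := Finset.sum_nonneg fun t _ => hb t
  rcases eq_or_lt_of_le hB0 with hBz | hBpos
  · have hbz : ∀ t, b t = 0 := by
      intro t
      have := (Finset.sum_eq_zero_iff_of_nonneg (fun t _ => hb t)).mp hBz.symm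
      exact this t (Finset.mem_univ t)
    have haz : ∀ t, a t = 0 := fun t => hab t (hbz t)
    simp [hA, haz]
  rcases eq_or_lt_of_le hA0 with hAz | hApos
  · have haz : ∀ t, a t = 0 := by
      intro t
      have := (Finset.sum_eq_zero_iff_of_nonneg (fun t _ => ha t)).mp hAz.symm
      exact this t (Finset.mem_univ t)
    simp [← hAz, haz]
  · have key : ∀ t, a t * (Real.log A - Real.log B) + (a t - b t * (A / B)) ≤
        a t * (Real.log (a t) - Real.log (b t)) := by
      intro t
      rcases eq_or_lt_of_le (hb t) with hbz | hbpos
      · have haz := hab t hbz.symm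
        simp [haz, ← hbz]
      · have h1 := aux1 (a t) (b t * (A / B)) (ha t)
          (by positivity) (by intro h; nlinarith [hbpos, div_pos hApos hBpos])
        have h2 : Real.log (b t * (A / B)) = Real.log (b t) + Real.log A - Real.log B := by
          rw [Real.log_mul (by linarith) (by positivity), Real.log_div (by linarith) (by linarith)]
          ring
        rw [h2] at h1
        nlinarith [h1]
    have hsum := Finset.sum_le_sum (fun t (_ : t ∈ Finset.univ) => key t)
    have hsplit : ∑ t, (a t * (Real.log A - Real.log B) + (a t - b t * (A / B)))
        = A * (Real.log A - Real.log B) + (A - (A / B) * B) := by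
      rw [Finset.sum_add_distrib, ← Finset.sum_mul, Finset.sum_sub_distrib,
        ← Finset.sum_mul, ← hA, ← hB]
      ring
    rw [hsplit] at hsum
    have hABz : A - A / B * B = 0 := by field_simp; ring
    rw [hABz, add_zero] at hsum
    have hlog : Real.log (1 / (n:ℝ) * A) - Real.log (1 / (n:ℝ) * B)
        = Real.log A - Real.log B := by
      rw [Real.log_mul (by positivity) (by linarith), Real.log_mul (by positivity) (by linarith)]
      ring
    rw [hlog]
    have := mul_le_mul_of_nonneg_left hsum (show (0:ℝ) ≤ 1 / n by positivity)
    calc 1 / (n:ℝ) * A * (Real.log A - Real.log B)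
        = 1 / (n:ℝ) * (A * (Real.log A - Real.log B)) := by ring
      _ ≤ _ := this

lemma kl_nonneg {M : ℕ} (p : Fin M → ℝ) (hp : ∀ i, 0 < p i) (hp1 : ∑ i, p i = 1)
    (w : Fin M → Fin M → ℝ) (r : Fin M → ℝ) (hw0 : ∀ i j, 0 ≤ w i j)
    (hw1 : ∀ i, ∑ j, w i j = 1) (hr : ∀ j, ∑ i, w i j * p i = r j) :
    0 ≤ ∑ i, ∑ j, w i j * p i * (Real.log (w i j) - Real.log (r j)) := by
  have hwr : ∀ i j, w i j * p i ≤ r j := by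
    intro i j
    rw [← hr j]
    exact Finset.single_le_sum (fun i' _ => mul_nonneg (hw0 i' j) (hp i').le)
      (Finset.mem_univ i)
  have e1 : ∑ i, ∑ j, w i j * p i = 1 := by
    have : ∀ i, ∑ j, w i j * p i = p i := by
      intro i; rw [← Finset.sum_mul, hw1, one_mul]
    simp [this, hp1]
  have e2 : ∑ j, r j = 1 := by
    rw [← Finset.sum_congr rfl fun j (_ : j ∈ Finset.univ) => hr j, Finset.sum_comm]
    exact e1
  have e3 : ∑ i, ∑ j, r j * p i = 1 := by
    have : ∀ i, ∑ j, r j * p i = p i := by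
      intro i; rw [← Finset.sum_mul, e2, one_mul]
    simp [this, hp1]
  have key : ∀ i j, w i j * p i - r j * p i ≤
      w i j * p i * (Real.log (w i j) - Real.log (r j)) := by
    intro i j
    have hor : w i j = 0 ∨ 0 < r j := by
      rcases eq_or_lt_of_le (hw0 i j) with h | h
      · exact Or.inl h.symm
      · exact Or.inr (lt_of_lt_of_le (mul_pos h (hp i)) (hwr i j))
    have hr0 : 0 ≤ r j := by
      rw [← hr j]
      exact Finset.sum_nonneg fun i' _ => mul_nonneg (hw0 i' j) (hp i').le
    rw [log_mul_reform (w i j) (r j) (p i) (hp i) (hw0 i j) hor]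
    refine aux1 _ _ (mul_nonneg (hw0 i j) (hp i).le) (mul_nonneg hr0 (hp i).le) ?_
    intro h
    have hrj : r j = 0 := by
      rcases mul_eq_zero.mp h with h' | h'
      · exact h'
      · exact absurd h' (hp i).ne'
    have h1 := hwr i j
    rw [hrj] at h1
    nlinarith [mul_nonneg (hw0 i j) (hp i).le]
  calc (0:ℝ) = ∑ i, ∑ j, (w i j * p i - r j * p i) := by
        rw [Finset.sum_congr rfl fun i (_ : i ∈ Finset.univ) => Finset.sum_sub_distrib _ _,
          Finset.sum_sub_distrib, e1, e3, sub_self]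
    _ ≤ _ := Finset.sum_le_sum fun i _ => Finset.sum_le_sum fun j _ => key i j

lemma hswap {M n : ℕ} (c : ℝ) (f : Fin n → Fin M → Fin M → ℝ) :
    c * ∑ t, ∑ i, ∑ j, f t i j = ∑ i, ∑ j, c * ∑ t, f t i j := by
  calc c * ∑ t, ∑ i, ∑ j, f t i j
      = c * ∑ i, ∑ t, ∑ j, f t i j := by rw [Finset.sum_comm]
    _ = c * ∑ i, ∑ j, ∑ t, f t i j := by
        congr 1
        exact Finset.sum_congr rfl fun i _ => Finset.sum_comm
    _ = ∑ i, ∑ j, c * ∑ t, f t i j := by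
        rw [Finset.mul_sum]
        exact Finset.sum_congr rfl fun i _ => Finset.mul_sum _ _ _

/-- for a tensorizable perception measure, convex in its second
argument, the variant `n`-letter RDP function with non-identically-distributed
reconstructions satisfies `R̃^{[n]}(D,P) = R(D, P/n)`. -/
theorem stmt15 {M n : ℕ} [NeZero M] [NeZero n] (p : Fin M → ℝ)
    (hp : ∀ i, 0 < p i) (hp1 : ∑ i, p i = 1)
    (dmat : Fin M → Fin M → ℝ) (hd0 : ∀ i j, 0 ≤ dmat i j)
    (d1 : (Fin M → ℝ) → (Fin M → ℝ) → ℝ)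
    (hd1nn : ∀ q r, 0 ≤ d1 q r) (hd1eq : ∀ q r, d1 q r = 0 ↔ q = r)
    (hd1conv : ∀ (q : Fin M → ℝ) (rs : Fin n → Fin M → ℝ),
      d1 q (fun j => (1 / (n : ℝ)) * ∑ t, rs t j) ≤ (1 / (n : ℝ)) * ∑ t, d1 q (rs t))
    (dn : ((Fin n → Fin M) → ℝ) → ((Fin n → Fin M) → ℝ) → ℝ)
    (hten : ∀ q : Fin n → Fin M → ℝ,
      dn (fun x => ∏ t, p (x t)) (fun x => ∏ t, q t (x t)) = ∑ t, d1 p (q t))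
    (R1 Rtilde : ℝ → ℝ → ℝ)
    (hR1 : ∀ D P, R1 D P = sInf { s : ℝ | ∃ (w : Fin M → Fin M → ℝ) (r : Fin M → ℝ),
        (∀ i j, 0 ≤ w i j) ∧ (∀ i, ∑ j, w i j = 1) ∧
        (∀ j, ∑ i, w i j * p i = r j) ∧
        (∑ i, ∑ j, w i j * p i * dmat i j ≤ D) ∧ d1 p r ≤ P ∧
        s = ∑ i, ∑ j, w i j * p i * (Real.log (w i j) - Real.log (r j)) })
    (hRtilde : ∀ D P, Rtilde D P = sInf { s : ℝ |
        ∃ (w : Fin n → Fin M → Fin M → ℝ) (q : Fin n → Fin M → ℝ),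
        (∀ t i j, 0 ≤ w t i j) ∧ (∀ t i, ∑ j, w t i j = 1) ∧
        (∀ t j, ∑ i, w t i j * p i = q t j) ∧
        ((1 / (n : ℝ)) * ∑ t, ∑ i, ∑ j, w t i j * p i * dmat i j ≤ D) ∧
        dn (fun x => ∏ t, p (x t)) (fun x => ∏ t, q t (x t)) ≤ P ∧
        s = (1 / (n : ℝ)) * ∑ t, ∑ i, ∑ j,
              w t i j * p i * (Real.log (w t i j) - Real.log (q t j)) }) :
    ∀ D P : ℝ, 0 ≤ D → 0 ≤ P → Rtilde D P = R1 D (P / n) := by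
  intro D P hD hP
  have hnR : (0:ℝ) < n := by exact_mod_cast Nat.pos_of_ne_zero (NeZero.ne n)
  rw [hRtilde, hR1]
  set SN : Set ℝ := { s : ℝ |
        ∃ (w : Fin n → Fin M → Fin M → ℝ) (q : Fin n → Fin M → ℝ),
        (∀ t i j, 0 ≤ w t i j) ∧ (∀ t i, ∑ j, w t i j = 1) ∧
        (∀ t j, ∑ i, w t i j * p i = q t j) ∧
        ((1 / (n : ℝ)) * ∑ t, ∑ i, ∑ j, w t i j * p i * dmat i j ≤ D) ∧
        dn (fun x => ∏ t, p (x t)) (fun x => ∏ t, q t (x t)) ≤ P ∧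
        s = (1 / (n : ℝ)) * ∑ t, ∑ i, ∑ j,
              w t i j * p i * (Real.log (w t i j) - Real.log (q t j)) } with hSN
  set S1 : Set ℝ := { s : ℝ | ∃ (w : Fin M → Fin M → ℝ) (r : Fin M → ℝ),
        (∀ i j, 0 ≤ w i j) ∧ (∀ i, ∑ j, w i j = 1) ∧
        (∀ j, ∑ i, w i j * p i = r j) ∧
        (∑ i, ∑ j, w i j * p i * dmat i j ≤ D) ∧ d1 p r ≤ P / (n:ℝ) ∧
        s = ∑ i, ∑ j, w i j * p i * (Real.log (w i j) - Real.log (r j)) } with hS1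
  have hcoll : ∀ x : ℝ, (1/(n:ℝ)) * ((n:ℝ) * x) = x := fun x => by field_simp
  have hsub : S1 ⊆ SN := by
    rintro s ⟨w, r, h0, h1, h2, h3, h4, h5⟩
    refine ⟨fun _ => w, fun _ => r, fun _ i j => h0 i j, fun _ i => h1 i,
      fun _ j => h2 j, ?_, ?_, ?_⟩
    · simp only [Finset.sum_const, Finset.card_univ, Fintype.card_fin, nsmul_eq_mul]
      rw [hcoll]
      exact h3
    · rw [hten]
      simp only [Finset.sum_const, Finset.card_univ, Fintype.card_fin, nsmul_eq_mul]
      calc (n:ℝ) * d1 p r ≤ (n:ℝ) * (P/(n:ℝ)) := mul_le_mul_of_nonneg_left h4 hnR.le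
        _ = P := by field_simp
    · rw [h5]
      simp only [Finset.sum_const, Finset.card_univ, Fintype.card_fin, nsmul_eq_mul]
      rw [hcoll]
  have hmap : ∀ s ∈ SN, ∃ s' ∈ S1, s' ≤ s := by
    rintro s ⟨W, Q, h0, h1, h2, h3, h4, h5⟩
    have hQ0 : ∀ t j, 0 ≤ Q t j := fun t j => by
      rw [← h2 t j]
      exact Finset.sum_nonneg fun i _ => mul_nonneg (h0 t i j) (hp i).le
    have hWQ : ∀ t i j, W t i j * p i ≤ Q t j := fun t i j => by
      rw [← h2 t j]
      exact Finset.single_le_sum (fun i' _ => mul_nonneg (h0 t i' j) (hp i').le)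
        (Finset.mem_univ i)
    refine ⟨∑ i, ∑ j, ((1/(n:ℝ)) * ∑ t, W t i j) * p i *
        (Real.log ((1/(n:ℝ)) * ∑ t, W t i j) - Real.log ((1/(n:ℝ)) * ∑ t, Q t j)),
      ⟨fun i j => (1/(n:ℝ)) * ∑ t, W t i j, fun j => (1/(n:ℝ)) * ∑ t, Q t j,
        ?_, ?_, ?_, ?_, ?_, rfl⟩, ?_⟩
    · intro i j
      exact mul_nonneg (by positivity) (Finset.sum_nonneg fun t _ => h0 t i j)
    · intro i
      rw [← Finset.mul_sum, Finset.sum_comm]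
      simp only [h1]
      rw [Finset.sum_const, Finset.card_univ, Fintype.card_fin, nsmul_eq_mul, mul_one]
      field_simp
    · intro j
      calc ∑ i, ((1/(n:ℝ)) * ∑ t, W t i j) * p i
          = ∑ i, (1/(n:ℝ)) * ∑ t, W t i j * p i :=
            Finset.sum_congr rfl fun i _ => by rw [mul_assoc, Finset.sum_mul]
        _ = (1/(n:ℝ)) * ∑ i, ∑ t, W t i j * p i := (Finset.mul_sum _ _ _).symm
        _ = (1/(n:ℝ)) * ∑ t, ∑ i, W t i j * p i := by rw [Finset.sum_comm]
        _ = (1/(n:ℝ)) * ∑ t, Q t j := by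
            congr 1
            exact Finset.sum_congr rfl fun t _ => h2 t j
    · calc ∑ i, ∑ j, ((1/(n:ℝ)) * ∑ t, W t i j) * p i * dmat i j
          = ∑ i, ∑ j, (1/(n:ℝ)) * ∑ t, W t i j * p i * dmat i j :=
            Finset.sum_congr rfl fun i _ => Finset.sum_congr rfl fun j _ => by
              simp only [mul_assoc, Finset.sum_mul]
        _ = (1/(n:ℝ)) * ∑ t, ∑ i, ∑ j, W t i j * p i * dmat i j := (hswap _ _).symm
        _ ≤ D := h3
    · have h4' : ∑ t, d1 p (Q t) ≤ P := by rw [← hten Q]; exact h4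
      calc d1 p (fun j => (1/(n:ℝ)) * ∑ t, Q t j)
          ≤ (1/(n:ℝ)) * ∑ t, d1 p (Q t) := hd1conv p Q
        _ ≤ (1/(n:ℝ)) * P := mul_le_mul_of_nonneg_left h4' (by positivity)
        _ = P / (n:ℝ) := by ring
    · rw [h5, hswap]
      refine Finset.sum_le_sum fun i _ => Finset.sum_le_sum fun j _ => ?_
      have ha : ∀ t, 0 ≤ W t i j * p i := fun t => mul_nonneg (h0 t i j) (hp i).le
      have hb : ∀ t, 0 ≤ Q t j * p i := fun t => mul_nonneg (hQ0 t j) (hp i).le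
      have hab : ∀ t, Q t j * p i = 0 → W t i j * p i = 0 := by
        intro t h
        have hq : Q t j = 0 := by
          rcases mul_eq_zero.mp h with h' | h'
          · exact h'
          · exact absurd h' (hp i).ne'
        have h6 := hWQ t i j
        rw [hq] at h6
        exact le_antisymm h6 (ha t)
      have e1 : ((1/(n:ℝ)) * ∑ t, W t i j) * p i = (1/(n:ℝ)) * ∑ t, W t i j * p i := by
        rw [mul_assoc, Finset.sum_mul]
      have e2 : ((1/(n:ℝ)) * ∑ t, Q t j) * p i = (1/(n:ℝ)) * ∑ t, Q t j * p i := by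
        rw [mul_assoc, Finset.sum_mul]
      have hor : (1/(n:ℝ)) * ∑ t, W t i j = 0 ∨ 0 < (1/(n:ℝ)) * ∑ t, Q t j := by
        rcases eq_or_lt_of_le (Finset.sum_nonneg fun t (_ : t ∈ Finset.univ) => h0 t i j)
          with h | h
        · exact Or.inl (by rw [← h, mul_zero])
        · refine Or.inr (mul_pos (by positivity) ?_)
          have hWp : 0 < (∑ t, W t i j) * p i := mul_pos h (hp i)
          rw [Finset.sum_mul] at hWp
          exact lt_of_lt_of_le hWp (Finset.sum_le_sum fun t _ => hWQ t i j)
      calc ((1/(n:ℝ)) * ∑ t, W t i j) * p i *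
            (Real.log ((1/(n:ℝ)) * ∑ t, W t i j) - Real.log ((1/(n:ℝ)) * ∑ t, Q t j))
          = (((1/(n:ℝ)) * ∑ t, W t i j) * p i) *
              (Real.log (((1/(n:ℝ)) * ∑ t, W t i j) * p i) -
               Real.log (((1/(n:ℝ)) * ∑ t, Q t j) * p i)) :=
            log_mul_reform _ _ _ (hp i)
              (mul_nonneg (by positivity) (Finset.sum_nonneg fun t _ => h0 t i j)) hor
        _ = ((1/(n:ℝ)) * ∑ t, W t i j * p i) *
              (Real.log ((1/(n:ℝ)) * ∑ t, W t i j * p i) -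
               Real.log ((1/(n:ℝ)) * ∑ t, Q t j * p i)) := by rw [e1, e2]
        _ ≤ (1/(n:ℝ)) * ∑ t, (W t i j * p i) *
              (Real.log (W t i j * p i) - Real.log (Q t j * p i)) :=
            kl_convex _ _ ha hb hab
        _ = (1/(n:ℝ)) * ∑ t, W t i j * p i *
              (Real.log (W t i j) - Real.log (Q t j)) := by
            congr 1
            refine Finset.sum_congr rfl fun t _ => ?_
            refine (log_mul_reform (W t i j) (Q t j) (p i) (hp i) (h0 t i j) ?_).symm
            rcases eq_or_lt_of_le (h0 t i j) with h | h
            · exact Or.inl h.symm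
            · exact Or.inr (lt_of_lt_of_le (mul_pos h (hp i)) (hWQ t i j))
  have hbddN : BddBelow SN := by
    refine ⟨0, fun s hs => ?_⟩
    obtain ⟨W, Q, h0, h1, h2, h3, h4, h5⟩ := hs
    rw [h5]
    refine mul_nonneg (by positivity) (Finset.sum_nonneg fun t _ => ?_)
    exact kl_nonneg p hp hp1 (W t) (Q t) (h0 t) (h1 t) (h2 t)
  have hbdd1 : BddBelow S1 := by
    refine ⟨0, fun s hs => ?_⟩
    obtain ⟨w, r, h0, h1, h2, h3, h4, h5⟩ := hs
    rw [h5]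
    exact kl_nonneg p hp hp1 w r h0 h1 h2
  by_cases hne : SN.Nonempty
  · obtain ⟨s0, hs0⟩ := hne
    obtain ⟨s1, hs1, hle⟩ := hmap s0 hs0
    refine le_antisymm ?_ ?_
    · exact csInf_le_csInf hbddN ⟨s1, hs1⟩ hsub
    · refine le_csInf ⟨s0, hs0⟩ fun s hs => ?_
      obtain ⟨s', hs', hle'⟩ := hmap s hs
      exact (csInf_le hbdd1 hs').trans hle'
  · rw [Set.not_nonempty_iff_eq_empty] at hne
    have h1e : S1 = ∅ := by
      rw [Set.eq_empty_iff_forall_notMem]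
      intro s hs
      exact Set.eq_empty_iff_forall_notMem.mp hne s (hsub hs)
    rw [hne, h1e]
end

section
/- For the binary source Be(p) with p ≤ 1/2 under Hamming distortion, when the total-variation perception constraint satisfies P > p, the RDP function equals the classical rate-distortion function: R(D,P) = H_b(p) − H_b(D) for D ∈ [0,p) and R(D,P) = 0 for D ≥ p, where H_b is the binary entropy function. -/
open Real

noncomputable def auxH (x : ℝ) : ℝ := Real.negMulLog x + Real.negMulLog (1 - x)

lemma aux_gibbs {a b : ℝ} (ha : 0 ≤ a) (hb : 0 ≤ b) (h : b = 0 → a = 0) :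
    a - b ≤ a * (Real.log a - Real.log b) := by
  rcases eq_or_lt_of_le ha with h0 | h0
  · simp [← h0]
    linarith
  · have hb0 : 0 < b := by
      rcases eq_or_lt_of_le hb with h1 | h1
      · exact absurd (h h1.symm) (by linarith)
      · exact h1
    have := Real.log_le_sub_one_of_pos (show 0 < b / a by positivity)
    rw [Real.log_div (ne_of_gt hb0) (ne_of_gt h0)] at this
    have := mul_le_mul_of_nonneg_left this (le_of_lt h0)
    have ha' : a * (b / a - 1) = b - a := by field_simp
    nlinarith

lemma aux_mul_log {c q : ℝ} (hc : 0 ≤ c) (hq : 0 < q) :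
    (c * q) * Real.log c = (c * q) * (Real.log (c * q) - Real.log q) := by
  rcases eq_or_lt_of_le hc with h | h
  · simp [← h]
  · rw [Real.log_mul (ne_of_gt h) (ne_of_gt hq)]; ring

lemma aux_concave : ConcaveOn ℝ (Set.Icc (0:ℝ) 1) auxH := by
  refine ⟨convex_Icc 0 1, ?_⟩
  intro x hx y hy a b ha hb hab
  simp only [smul_eq_mul, auxH]
  have h1 := Real.concaveOn_negMulLog.2 (Set.mem_Ici.2 hx.1) (Set.mem_Ici.2 hy.1) ha hb hab
  have h2 := Real.concaveOn_negMulLog.2 (x := 1 - x) (y := 1 - y)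
    (Set.mem_Ici.2 (by linarith [hx.2])) (Set.mem_Ici.2 (by linarith [hy.2])) ha hb hab
  simp only [smul_eq_mul] at h1 h2
  have he : 1 - (a * x + b * y) = a * (1 - x) + b * (1 - y) := by ring_nf; linarith
  rw [he]
  linarith

lemma auxH_symm (x : ℝ) : auxH (1 - x) = auxH x := by
  simp [auxH, sub_sub_cancel]; ring

lemma aux_mono {a b : ℝ} (ha : 0 ≤ a) (hab : a ≤ b) (hb : b ≤ 1/2) :
    auxH a ≤ auxH b := by
  rcases eq_or_lt_of_le hab with h | h
  · rw [h]
  · have h2a : 0 < 1 - 2*a := by linarith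
    set t : ℝ := (1 - a - b) / (1 - 2*a) with ht
    have ht0 : 0 ≤ t := div_nonneg (by linarith) (le_of_lt h2a)
    have ht1 : t ≤ 1 := by rw [div_le_one h2a]; linarith
    have key := aux_concave.2 (x := a) (y := 1 - a)
      (Set.mem_Icc.2 ⟨ha, by linarith⟩) (Set.mem_Icc.2 ⟨by linarith, by linarith⟩)
      ht0 (by linarith : (0:ℝ) ≤ 1 - t) (by ring)
    simp only [smul_eq_mul] at key
    have htm : t * (1 - 2*a) = 1 - a - b := by
      rw [ht]; exact div_mul_cancel₀ _ (ne_of_gt h2a)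
    have he : t * a + (1 - t) * (1 - a) = b := by linear_combination -htm
    rw [he, auxH_symm] at key
    linarith [key]

lemma aux_r_negMulLog {x r : ℝ} (hx : 0 ≤ x) (hr : 0 < r) :
    r * Real.negMulLog (x / r) = -(x * (Real.log x - Real.log r)) := by
  rcases eq_or_lt_of_le hx with h | h
  · simp [← h]
  · rw [Real.negMulLog, Real.log_div (ne_of_gt h) (ne_of_gt hr)]
    field_simp

lemma aux_col {a b : ℝ} (ha : 0 ≤ a) (hb : 0 ≤ b) :
    a * Real.log a + b * Real.log b - (a+b) * Real.log (a+b)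
      = -((a+b) * auxH (b/(a+b))) := by
  rcases eq_or_lt_of_le (by linarith : (0:ℝ) ≤ a + b) with h | h
  · have ha0 : a = 0 := by linarith
    have hb0 : b = 0 := by linarith
    simp [ha0, hb0]
  · have h1 : 1 - b/(a+b) = a/(a+b) := by field_simp; ring
    rw [auxH, h1, mul_add, aux_r_negMulLog hb h, aux_r_negMulLog ha h]
    ring

lemma aux_jensen {r0 r1 x0 x1 : ℝ} (hr0 : 0 ≤ r0) (hr1 : 0 ≤ r1) (hsum : r0 + r1 = 1)
    (hx0 : 0 ≤ x0) (hx1 : 0 ≤ x1) (hx0' : x0 ≤ r0) (hx1' : x1 ≤ r1) :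
    r0 * auxH (x0/r0) + r1 * auxH (x1/r1) ≤ auxH (x0 + x1) := by
  have m0 : x0/r0 ∈ Set.Icc (0:ℝ) 1 := by
    rcases eq_or_lt_of_le hr0 with h | h
    · simp [← h]
    · exact ⟨by positivity, (div_le_one h).2 hx0'⟩
  have m1 : x1/r1 ∈ Set.Icc (0:ℝ) 1 := by
    rcases eq_or_lt_of_le hr1 with h | h
    · simp [← h]
    · exact ⟨by positivity, (div_le_one h).2 hx1'⟩
  have key := aux_concave.2 m0 m1 hr0 hr1 hsum
  simp only [smul_eq_mul] at key
  have e0 : r0 * (x0/r0) = x0 := by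
    rcases eq_or_lt_of_le hr0 with h | h
    · have : x0 = 0 := le_antisymm (by linarith) hx0
      simp [← h, this]
    · field_simp
  have e1 : r1 * (x1/r1) = x1 := by
    rcases eq_or_lt_of_le hr1 with h | h
    · have : x1 = 0 := le_antisymm (by linarith) hx1
      simp [← h, this]
    · field_simp
  rw [e0, e1] at key
  exact key

lemma aux_converse {p D : ℝ} (hp0 : 0 < p) (hp : p ≤ 1/2) (hD2 : D ≤ 1/2)
    {w00 w01 w10 w11 r0 r1 : ℝ}
    (h00 : 0 ≤ w00) (h01 : 0 ≤ w01) (h10 : 0 ≤ w10) (h11 : 0 ≤ w11)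
    (hrow0 : w00 + w01 = 1) (hrow1 : w10 + w11 = 1)
    (hr0 : w00 * (1-p) + w10 * p = r0) (hr1 : w01 * (1-p) + w11 * p = r1)
    (hdist : w01 * (1-p) + w10 * p ≤ D) :
    auxH p - auxH D ≤
      w00 * (1-p) * (Real.log w00 - Real.log r0)
      + w01 * (1-p) * (Real.log w01 - Real.log r1)
      + w10 * p * (Real.log w10 - Real.log r0)
      + w11 * p * (Real.log w11 - Real.log r1) := by
  have hp1 : 0 < 1 - p := by linarith
  set a0 := w00 * (1-p) with ha0
  set a1 := w01 * (1-p) with ha1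
  set b0 := w10 * p with hb0
  set b1 := w11 * p with hb1
  have ha0n : 0 ≤ a0 := by positivity
  have ha1n : 0 ≤ a1 := by positivity
  have hb0n : 0 ≤ b0 := by positivity
  have hb1n : 0 ≤ b1 := by positivity
  have e00 : a0 * Real.log w00 = a0 * (Real.log a0 - Real.log (1-p)) := aux_mul_log h00 hp1
  have e01 : a1 * Real.log w01 = a1 * (Real.log a1 - Real.log (1-p)) := aux_mul_log h01 hp1
  have e10 : b0 * Real.log w10 = b0 * (Real.log b0 - Real.log p) := aux_mul_log h10 hp0
  have e11 : b1 * Real.log w11 = b1 * (Real.log b1 - Real.log p) := aux_mul_log h11 hp0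
  have hc0 := aux_col ha0n hb0n
  have hc1 := aux_col hb1n ha1n
  have hsump : a0 + a1 = 1 - p := by
    rw [ha0, ha1, ← add_mul, hrow0, one_mul]
  have hsumq : b0 + b1 = p := by
    rw [hb0, hb1, ← add_mul, hrow1, one_mul]
  have hj := aux_jensen (r0 := r0) (r1 := r1) (x0 := b0) (x1 := a1)
    (by linarith) (by linarith) (by linarith)
    hb0n ha1n (by linarith) (by linarith)
  have hmono := aux_mono (a := b0 + a1) (b := D) (by linarith) (by linarith) hD2
  have hHp : auxH p = -(p * Real.log p) - (1-p) * Real.log (1-p) := by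
    simp [auxH, Real.negMulLog]; ring
  have hr0' : a0 + b0 = r0 := by linarith
  have hr1' : b1 + a1 = r1 := by linarith
  rw [hr0'] at hc0
  rw [hr1'] at hc1
  have key : a0 * (Real.log w00 - Real.log r0) + a1 * (Real.log w01 - Real.log r1)
      + b0 * (Real.log w10 - Real.log r0) + b1 * (Real.log w11 - Real.log r1)
      = auxH p - (r0 * auxH (b0/r0) + r1 * auxH (a1/r1)) := by
    rw [hHp]
    linear_combination e00 + e01 + e10 + e11 + hc0 + hc1
      - (Real.log (1-p)) * hsump - (Real.log p) * hsumq
      - (Real.log r0) * hr0' - (Real.log r1) * hr1'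
  calc auxH p - auxH D ≤ auxH p - auxH (b0 + a1) := by linarith
    _ ≤ auxH p - (r0 * auxH (b0/r0) + r1 * auxH (a1/r1)) := by linarith
    _ = _ := by rw [← key]

lemma aux_nonneg {p : ℝ} (hp0 : 0 < p) (hp1 : p < 1)
    {w00 w01 w10 w11 r0 r1 : ℝ}
    (h00 : 0 ≤ w00) (h01 : 0 ≤ w01) (h10 : 0 ≤ w10) (h11 : 0 ≤ w11)
    (hr0 : w00 * (1-p) + w10 * p = r0) (hr1 : w01 * (1-p) + w11 * p = r1) :
    0 ≤ w00 * (1-p) * (Real.log w00 - Real.log r0)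
      + w01 * (1-p) * (Real.log w01 - Real.log r1)
      + w10 * p * (Real.log w10 - Real.log r0)
      + w11 * p * (Real.log w11 - Real.log r1) := by
  have hq : (0:ℝ) < 1 - p := by linarith
  have hr0n : 0 ≤ r0 := by nlinarith
  have hr1n : 0 ≤ r1 := by nlinarith
  have g00 := aux_gibbs h00 hr0n (fun h => by nlinarith)
  have g10 := aux_gibbs h10 hr0n (fun h => by nlinarith)
  have g01 := aux_gibbs h01 hr1n (fun h => by nlinarith)
  have g11 := aux_gibbs h11 hr1n (fun h => by nlinarith)
  have m00 := mul_le_mul_of_nonneg_left g00 (le_of_lt hq)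
  have m01 := mul_le_mul_of_nonneg_left g01 (le_of_lt hq)
  have m10 := mul_le_mul_of_nonneg_left g10 (le_of_lt hp0)
  have m11 := mul_le_mul_of_nonneg_left g11 (le_of_lt hp0)
  have hs : (1-p)*(w00 - r0) + (1-p)*(w01 - r1) + p*(w10 - r0) + p*(w11 - r1) = 0 := by
    linear_combination hr0 + hr1
  nlinarith [m00, m01, m10, m11, hs]

/-- for the binary source `Be(p)` with `p ≤ 1/2`, Hamming distortion,
and total-variation perception with `P > p`, the RDP function equals the classical
binary rate-distortion function. -/
theorem stmt19 (p : ℝ) (hp0 : 0 < p) (hp : p ≤ 1 / 2)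
    (psrc : Fin 2 → ℝ) (hpsrc : psrc = fun i => if i = 0 then 1 - p else p)
    (Hb : ℝ → ℝ)
    (hHb : ∀ a : ℝ, Hb a = -(a * Real.log a) - (1 - a) * Real.log (1 - a))
    (RF : ℝ → ℝ → ℝ)
    (hRF : ∀ D P, RF D P = sInf { t : ℝ |
        ∃ (w : Fin 2 → Fin 2 → ℝ) (r : Fin 2 → ℝ),
        (∀ i j, 0 ≤ w i j) ∧ (∀ i, ∑ j, w i j = 1) ∧
        (∀ j, ∑ i, w i j * psrc i = r j) ∧
        (∑ i, ∑ j, (if i = j then (0 : ℝ) else 1) * w i j * psrc i ≤ D) ∧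
        (|psrc 1 - r 1| ≤ P) ∧
        t = ∑ i, ∑ j, w i j * psrc i * (Real.log (w i j) - Real.log (r j)) })
    (P : ℝ) (hP : p < P) :
    ∀ D : ℝ, (0 ≤ D → D < p → RF D P = Hb p - Hb D) ∧ (p ≤ D → RF D P = 0) := by
  have hp1 : (0:ℝ) < 1 - p := by linarith
  have hbH : ∀ a : ℝ, Hb a = auxH a := by
    intro a
    rw [hHb, auxH]
    simp [Real.negMulLog]
    ring
  intro D
  constructor
  · -- case 0 ≤ D < p
    intro hD0 hDp
    rw [hRF]
    have hD2 : D ≤ 1/2 := by linarith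
    -- lower bound
    have hlb : ∀ t ∈ { t : ℝ |
        ∃ (w : Fin 2 → Fin 2 → ℝ) (r : Fin 2 → ℝ),
        (∀ i j, 0 ≤ w i j) ∧ (∀ i, ∑ j, w i j = 1) ∧
        (∀ j, ∑ i, w i j * psrc i = r j) ∧
        (∑ i, ∑ j, (if i = j then (0 : ℝ) else 1) * w i j * psrc i ≤ D) ∧
        (|psrc 1 - r 1| ≤ P) ∧
        t = ∑ i, ∑ j, w i j * psrc i * (Real.log (w i j) - Real.log (r j)) },
        Hb p - Hb D ≤ t := by
      rintro t ⟨w, r, hw, hrow, hr, hdist, hper, ht⟩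
      have hr0 := hr 0
      have hr1 := hr 1
      have hrow0 := hrow 0
      have hrow1 := hrow 1
      simp only [hpsrc, Fin.sum_univ_two] at hr0 hr1 hdist ht
      norm_num at hr0 hr1 hdist ht
      have hc := aux_converse hp0 hp hD2 (hw 0 0) (hw 0 1) (hw 1 0) (hw 1 1)
        (by simpa [Fin.sum_univ_two] using hrow0)
        (by simpa [Fin.sum_univ_two] using hrow1)
        hr0 hr1 (by linarith)
      rw [ht, hbH, hbH]
      linarith
    -- the achieving channel
    obtain ⟨q, hqdef⟩ : ∃ q : ℝ, q = (p - D) / (1 - 2*D) := ⟨_, rfl⟩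
    have h2D : (0:ℝ) < 1 - 2*D := by linarith
    have hq : q * (1 - 2*D) = p - D := by
      rw [hqdef]; exact div_mul_cancel₀ _ (ne_of_gt h2D)
    have hq0 : 0 < q := by
      rw [hqdef]; exact div_pos (by linarith) h2D
    have hqp : q ≤ p := by nlinarith [hq]
    have hq1 : 0 < 1 - q := by linarith
    have hD1 : (0:ℝ) < 1 - D := by linarith
    have hmem : Hb p - Hb D ∈ { t : ℝ |
        ∃ (w : Fin 2 → Fin 2 → ℝ) (r : Fin 2 → ℝ),
        (∀ i j, 0 ≤ w i j) ∧ (∀ i, ∑ j, w i j = 1) ∧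
        (∀ j, ∑ i, w i j * psrc i = r j) ∧
        (∑ i, ∑ j, (if i = j then (0 : ℝ) else 1) * w i j * psrc i ≤ D) ∧
        (|psrc 1 - r 1| ≤ P) ∧
        t = ∑ i, ∑ j, w i j * psrc i * (Real.log (w i j) - Real.log (r j)) } := by
      refine ⟨fun i j => if i = 0 then (if j = 0 then (1-q)*(1-D)/(1-p) else q*D/(1-p))
              else (if j = 0 then (1-q)*D/p else q*(1-D)/p),
            fun j => if j = 0 then 1-q else q, ?_, ?_, ?_, ?_, ?_, ?_⟩
      · intro i j
        fin_cases i <;> fin_cases j <;> norm_num <;>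
          exact div_nonneg (mul_nonneg (by linarith) (by linarith)) (by linarith)
      · intro i
        fin_cases i <;> norm_num [Fin.sum_univ_two] <;> rw [← add_div]
        · rw [div_eq_one_iff_eq (ne_of_gt hp1)]
          linear_combination -hq
        · rw [div_eq_one_iff_eq (ne_of_gt hp0)]
          linear_combination hq
      · intro j
        fin_cases j <;> norm_num [Fin.sum_univ_two, hpsrc] <;> field_simp <;> ring
      · simp only [hpsrc, Fin.sum_univ_two]
        norm_num
        have he : q*D/(1-p)*(1-p) + (1-q)*D/p*p = D := by
          field_simp
          ring
        linarith [he]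
      · simp only [hpsrc]
        norm_num
        rw [abs_of_nonneg (by linarith)]
        linarith
      · simp only [hpsrc, Fin.sum_univ_two]
        norm_num
        have t00 : (1-q)*(1-D)/(1-p) * (1-p) * (Real.log ((1-q)*(1-D)/(1-p)) - Real.log (1-q))
            = (1-q)*(1-D)*(Real.log (1-D) - Real.log (1-p)) := by
          rw [Real.log_div (by positivity) (ne_of_gt hp1),
            Real.log_mul (ne_of_gt hq1) (ne_of_gt hD1)]
          field_simp
          ring
        have t11 : q*(1-D)/p * p * (Real.log (q*(1-D)/p) - Real.log q)
            = q*(1-D)*(Real.log (1-D) - Real.log p) := by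
          rw [Real.log_div (by positivity) (ne_of_gt hp0),
            Real.log_mul (ne_of_gt hq0) (ne_of_gt hD1)]
          field_simp
          ring
        have t01 : q*D/(1-p) * (1-p) * (Real.log (q*D/(1-p)) - Real.log q)
            = q*D*(Real.log D - Real.log (1-p)) := by
          rcases eq_or_lt_of_le hD0 with h | h
          · rw [← h]; norm_num
          · rw [Real.log_div (by positivity) (ne_of_gt hp1),
              Real.log_mul (ne_of_gt hq0) (ne_of_gt h)]
            field_simp
            ring
        have t10 : (1-q)*D/p * p * (Real.log ((1-q)*D/p) - Real.log (1-q))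
            = (1-q)*D*(Real.log D - Real.log p) := by
          rcases eq_or_lt_of_le hD0 with h | h
          · rw [← h]; norm_num
          · rw [Real.log_div (by positivity) (ne_of_gt hp0),
              Real.log_mul (ne_of_gt hq1) (ne_of_gt h)]
            field_simp
            ring
        rw [hHb, hHb]
        linear_combination (Real.log p - Real.log (1-p)) * hq - t00 - t01 - t10 - t11
    exact le_antisymm (csInf_le ⟨Hb p - Hb D, hlb⟩ hmem) (le_csInf ⟨_, hmem⟩ hlb)
  · -- case p ≤ D
    intro hDp
    rw [hRF]
    have hlb : ∀ t ∈ { t : ℝ |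
        ∃ (w : Fin 2 → Fin 2 → ℝ) (r : Fin 2 → ℝ),
        (∀ i j, 0 ≤ w i j) ∧ (∀ i, ∑ j, w i j = 1) ∧
        (∀ j, ∑ i, w i j * psrc i = r j) ∧
        (∑ i, ∑ j, (if i = j then (0 : ℝ) else 1) * w i j * psrc i ≤ D) ∧
        (|psrc 1 - r 1| ≤ P) ∧
        t = ∑ i, ∑ j, w i j * psrc i * (Real.log (w i j) - Real.log (r j)) },
        (0:ℝ) ≤ t := by
      rintro t ⟨w, r, hw, hrow, hr, hdist, hper, ht⟩
      have hr0 := hr 0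
      have hr1 := hr 1
      simp only [hpsrc, Fin.sum_univ_two] at hr0 hr1 ht
      norm_num at hr0 hr1 ht
      have hc := aux_nonneg hp0 (by linarith) (hw 0 0) (hw 0 1) (hw 1 0) (hw 1 1) hr0 hr1
      rw [ht]
      linarith
    have hmem : (0:ℝ) ∈ { t : ℝ |
        ∃ (w : Fin 2 → Fin 2 → ℝ) (r : Fin 2 → ℝ),
        (∀ i j, 0 ≤ w i j) ∧ (∀ i, ∑ j, w i j = 1) ∧
        (∀ j, ∑ i, w i j * psrc i = r j) ∧
        (∑ i, ∑ j, (if i = j then (0 : ℝ) else 1) * w i j * psrc i ≤ D) ∧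
        (|psrc 1 - r 1| ≤ P) ∧
        t = ∑ i, ∑ j, w i j * psrc i * (Real.log (w i j) - Real.log (r j)) } := by
      refine ⟨fun _ j => if j = 0 then 1 else 0, fun j => if j = 0 then 1 else 0,
        ?_, ?_, ?_, ?_, ?_, ?_⟩
      · intro i j
        fin_cases j <;> norm_num
      · intro i
        norm_num [Fin.sum_univ_two]
      · intro j
        fin_cases j <;> norm_num [Fin.sum_univ_two, hpsrc]
      · simp only [hpsrc, Fin.sum_univ_two]
        norm_num
        linarith
      · simp only [hpsrc]
        norm_num
        rw [abs_of_nonneg (by linarith)]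
        linarith
      · simp only [hpsrc, Fin.sum_univ_two]
        norm_num
    exact le_antisymm (csInf_le ⟨0, hlb⟩ hmem) (le_csInf ⟨_, hmem⟩ hlb)
end
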